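/- arXiv:2501.19027 — 2 statements merged into one kernel-verified Lean document; each statement's English description precedes it below -/
import Mathlib

section
/- Let n ∈ ℕ, let φ : ℕ → ℝ^n, R : ℕ → ℝ, γ, λ ∈ ℝ, and let θ : ℕ → ℝ^n be any weight sequence. For all natural numbers k, t with k + 1 ≤ t, the interim λ-return satisfies the recursion G_k^{λ|t+1} = G_k^{λ|t} + (λγ)^{t−k} δ'_t, where δ'_t := R_{t+1} + γ ⟨θ_t, φ_{t+1}⟩ − ⟨θ_{t−1}, φ_t⟩. -/
open Matrix

/-- The `i`-step return from time `k`: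
`G_k^{(i)} = Σ_{j=1}^{i} γ^{j−1} R_{k+j} + γ^i ⟨θ_{k+i−1}, φ_{k+i}⟩`. -/
noncomputable def iStepReturn (n : ℕ) (θ φ : ℕ → (Fin n → ℝ)) (R : ℕ → ℝ) (γ : ℝ)
    (k i : ℕ) : ℝ :=
  (∑ j ∈ Finset.Icc 1 i, γ ^ (j - 1) * R (k + j)) + γ ^ i * (θ (k + i - 1) ⬝ᵥ φ (k + i))

/-- The interim λ-return truncated at horizon `t` (for `k < t`):
`G_k^{λ|t} = (1−λ) Σ_{i=1}^{t−k−1} λ^{i−1} G_k^{(i)} + λ^{t−k−1} G_k^{(t−k)}`. -/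
noncomputable def interimLambdaReturn (n : ℕ) (θ φ : ℕ → (Fin n → ℝ)) (R : ℕ → ℝ)
    (γ lam : ℝ) (k t : ℕ) : ℝ :=
  (1 - lam) * ∑ i ∈ Finset.Icc 1 (t - k - 1), lam ^ (i - 1) * iStepReturn n θ φ R γ k i
    + lam ^ (t - k - 1) * iStepReturn n θ φ R γ k (t - k)

/-- The paper's `δ'_t`. -/
noncomputable def interimTDError (n : ℕ) (θ φ : ℕ → (Fin n → ℝ)) (R : ℕ → ℝ) (γ : ℝ)
    (t : ℕ) : ℝ :=
  R (t + 1) + γ * (θ t ⬝ᵥ φ (t + 1)) - (θ (t - 1) ⬝ᵥ φ t)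

section

variable (n : ℕ) (θ φ : ℕ → (Fin n → ℝ)) (R : ℕ → ℝ) (γ : ℝ)

theorem iStepReturn_succ (k i : ℕ) :
    iStepReturn n θ φ R γ k (i + 1) =
      iStepReturn n θ φ R γ k i + γ ^ i * interimTDError n θ φ R γ (k + i) := by
  unfold iStepReturn interimTDError
  rw [Finset.sum_Icc_succ_top (Nat.le_add_left 1 i), Nat.add_sub_cancel, ← add_assoc,
    Nat.add_sub_cancel]
  ring

/-- Only the last two `i`-step returns are weighted differently at horizons `t` and `t + 1`. -/
theorem interimLambdaReturn_succ (lam : ℝ) {k t : ℕ} (hkt : k < t) :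
    interimLambdaReturn n θ φ R γ lam k (t + 1) =
      interimLambdaReturn n θ φ R γ lam k t + lam ^ (t - k) *
        (iStepReturn n θ φ R γ k (t - k + 1) - iStepReturn n θ φ R γ k (t - k)) := by
  obtain ⟨m, rfl⟩ : ∃ m, t = k + (m + 1) := ⟨t - k - 1, by omega⟩
  have hsub : k + (m + 1) - k = m + 1 := by omega
  have hsub' : k + (m + 1) + 1 - k = m + 1 + 1 := by omega
  unfold interimLambdaReturn
  rw [hsub, hsub', Nat.add_sub_cancel, Nat.add_sub_cancel,
    Finset.sum_Icc_succ_top (Nat.le_add_left 1 m), Nat.add_sub_cancel]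
  ring

end

/-- The interim λ-return recursion:
`G_k^{λ|t+1} = G_k^{λ|t} + (λγ)^{t−k} δ'_t`, where
`δ'_t = R_{t+1} + γ ⟨θ_t, φ_{t+1}⟩ − ⟨θ_{t−1}, φ_t⟩`. -/
theorem interimLambdaReturn_rec (n : ℕ) (φ : ℕ → (Fin n → ℝ)) (R : ℕ → ℝ)
    (γ lam : ℝ) (θ : ℕ → (Fin n → ℝ)) :
    ∀ k t : ℕ, k + 1 ≤ t →
      interimLambdaReturn n θ φ R γ lam k (t + 1) =
        interimLambdaReturn n θ φ R γ lam k t +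
          (lam * γ) ^ (t - k) *
            (R (t + 1) + γ * (θ t ⬝ᵥ φ (t + 1)) - (θ (t - 1) ⬝ᵥ φ t)) := by
  intro k t hkt
  have hkt' : k + (t - k) = t := by omega
  rw [interimLambdaReturn_succ n θ φ R γ lam hkt, iStepReturn_succ, hkt', interimTDError, mul_pow]
  ring
end

section
/- (Theorem 2, true online TD(λ) as a special case of true online TD(λ)-Replan.) Let n ∈ ℕ, φ : ℕ → ℝ^n, α : ℕ → ℝ, R : ℕ → ℝ, γ, λ ∈ ℝ, θ_0 ∈ ℝ^n, and set A_t := I − α_t φ_t φ_tᵀ. Define e_{−1} := 0, ē_{−1} := 0, ā_{−1} := θ_0, θ_{−1} := θ_0, and for t ≥ 0 define θ_t := ā_{t−1} + ē_{t−1}, e_t := γλ A_t e_{t−1} + α_t φ_t, ā_t := ā_{t−1} − α_t ⟨ā_{t−1}, φ_t⟩ φ_t, and ē_t := A_t ē_{t−1} + (δ_t + ⟨θ_t, φ_t⟩ − ⟨θ_{t−1}, φ_t⟩) e_t + α_t ⟨θ_{t−1}, φ_t⟩ φ_t, where δ_t := R_{t+1} + γ ⟨θ_t, φ_{t+1}⟩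 − ⟨θ_t, φ_t⟩. Then for every t ≥ 0, the sequence θ satisfies the true online TD(λ) update: θ_{t+1} = θ_t + (δ_t + ⟨θ_t, φ_t⟩ − ⟨θ_{t−1}, φ_t⟩) e_t − α_t (⟨θ_t, φ_t⟩ − ⟨θ_{t−1}, φ_t⟩) φ_t. -/
open Matrix

/-!
The summary trace `ā` evolves by `ā_t = A_t ā_{t−1}`, and `ē` by `A_t ē_{t−1}` plus two
correction terms. Since `θ_t = ā_{t−1} + ē_{t−1}`, linearity of `A_t` gives
`θ_{t+1} = A_t θ_t + (δ_t + ⟨θ_t, φ_t⟩ − ⟨θ_{t−1}, φ_t⟩) e_t + α_t ⟨θ_{t−1}, φ_t⟩ φ_t`,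
and expanding `A_t θ_t = θ_t − α_t ⟨θ_t, φ_t⟩ φ_t` yields the true online TD(λ) update.
-/

theorem Matrix.one_sub_smul_vecMulVec_mulVec {ι R : Type*} [Fintype ι] [DecidableEq ι]
    [CommRing R] (a : R) (u v x : ι → R) :
    (1 - a • vecMulVec u v) *ᵥ x = x - (a * (v ⬝ᵥ x)) • u := by
  rw [sub_mulVec, one_mulVec, smul_mulVec, vecMulVec_mulVec, op_smul_eq_smul, smul_smul]

theorem trueOnlineTD_special_case_general (n : ℕ) (φ : ℕ → (Fin n → ℝ)) (α : ℕ → ℝ)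
    (R : ℕ → ℝ) (γ : ℝ)
    (A : ℕ → Matrix (Fin n) (Fin n) ℝ)
    (hA : ∀ i, A i = 1 - α i • vecMulVec (φ i) (φ i))
    (e ebar abar θ : ℕ → (Fin n → ℝ))
    (hθ : ∀ t, θ (t + 1) = abar t + ebar t)
    (habar : ∀ t, abar (t + 1) = abar t - (α t * (abar t ⬝ᵥ φ t)) • φ t)
    (hebar : ∀ t, ebar (t + 1) =
      (A t) *ᵥ ebar t
        + ((R (t + 1) + γ * (θ (t + 1) ⬝ᵥ φ (t + 1)) - (θ (t + 1) ⬝ᵥ φ t))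
            + (θ (t + 1) ⬝ᵥ φ t) - (θ t ⬝ᵥ φ t)) • e (t + 1)
        + (α t * (θ t ⬝ᵥ φ t)) • φ t) :
    ∀ t, θ (t + 2) = θ (t + 1)
        + ((R (t + 1) + γ * (θ (t + 1) ⬝ᵥ φ (t + 1)) - (θ (t + 1) ⬝ᵥ φ t))
            + (θ (t + 1) ⬝ᵥ φ t) - (θ t ⬝ᵥ φ t)) • e (t + 1)
        - (α t * ((θ (t + 1) ⬝ᵥ φ t) - (θ t ⬝ᵥ φ t))) • φ t := by
  intro t
  have hA_mulVec (x : Fin n → ℝ) : A t *ᵥ x = x - (α t * (φ t ⬝ᵥ x)) • φ t := by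
    rw [hA, one_sub_smul_vecMulVec_mulVec]
  have habar_eq : abar (t + 1) = A t *ᵥ abar t := by
    rw [habar, hA_mulVec, dotProduct_comm]
  have hθ_step : θ (t + 2) = A t *ᵥ θ (t + 1)
      + ((R (t + 1) + γ * (θ (t + 1) ⬝ᵥ φ (t + 1)) - (θ (t + 1) ⬝ᵥ φ t))
          + (θ (t + 1) ⬝ᵥ φ t) - (θ t ⬝ᵥ φ t)) • e (t + 1)
      + (α t * (θ t ⬝ᵥ φ t)) • φ t := by
    rw [hθ (t + 1), habar_eq, hebar, hθ t, mulVec_add]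
    abel
  rw [hθ_step, hA_mulVec, dotProduct_comm]
  module

/-- **Theorem 2** (true online TD(λ) as a special case of true online TD(λ)-Replan).
With `A_t = I − α_t φ_t φ_tᵀ`, initial conditions `e_{−1} = 0`, `ē_{−1} = 0`,
`ā_{−1} = θ_0`, `θ_{−1} = θ_0`, and, for `t ≥ 0`,
`θ_t = ā_{t−1} + ē_{t−1}`,
`e_t = γλ A_t e_{t−1} + α_t φ_t`,
`ā_t = ā_{t−1} − α_t ⟨ā_{t−1}, φ_t⟩ φ_t`,
`ē_t = A_t ē_{t−1} + (δ_t + ⟨θ_t,φ_t⟩ − ⟨θ_{t−1},φ_t⟩) e_t + α_t ⟨θ_{t−1},φ_t⟩ φ_t`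
where `δ_t = R_{t+1} + γ⟨θ_t,φ_{t+1}⟩ − ⟨θ_t,φ_t⟩`, the sequence `θ` satisfies the
true online TD(λ) update
`θ_{t+1} = θ_t + (δ_t + ⟨θ_t,φ_t⟩ − ⟨θ_{t−1},φ_t⟩) e_t − α_t (⟨θ_t,φ_t⟩ − ⟨θ_{t−1},φ_t⟩) φ_t`
for every `t ≥ 0`. Here index `u + 1` of each sequence corresponds to subscript `u`
(so index `0` corresponds to subscript `−1`). -/
theorem trueOnlineTD_special_case (n : ℕ) (φ : ℕ → (Fin n → ℝ)) (α : ℕ → ℝ)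
    (R : ℕ → ℝ) (γ lam : ℝ) (θ0 : Fin n → ℝ)
    (A : ℕ → Matrix (Fin n) (Fin n) ℝ)
    (hA : ∀ i, A i = 1 - α i • vecMulVec (φ i) (φ i))
    (e ebar abar θ : ℕ → (Fin n → ℝ))
    (he0 : e 0 = 0) (hebar0 : ebar 0 = 0) (habar0 : abar 0 = θ0) (hθ0 : θ 0 = θ0)
    (hθ : ∀ t, θ (t + 1) = abar t + ebar t)
    (he : ∀ t, e (t + 1) = (γ * lam) • ((A t) *ᵥ e t) + α t • φ t)
    (habar : ∀ t, abar (t + 1) = abar t - (α t * (abar t ⬝ᵥ φ t)) • φ t)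
    (hebar : ∀ t, ebar (t + 1) =
      (A t) *ᵥ ebar t
        + ((R (t + 1) + γ * (θ (t + 1) ⬝ᵥ φ (t + 1)) - (θ (t + 1) ⬝ᵥ φ t))
            + (θ (t + 1) ⬝ᵥ φ t) - (θ t ⬝ᵥ φ t)) • e (t + 1)
        + (α t * (θ t ⬝ᵥ φ t)) • φ t) :
    ∀ t, θ (t + 2) = θ (t + 1)
        + ((R (t + 1) + γ * (θ (t + 1) ⬝ᵥ φ (t + 1)) - (θ (t + 1) ⬝ᵥ φ t))
            + (θ (t + 1) ⬝ᵥ φ t) - (θ t ⬝ᵥ φ t)) • e (t + 1)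
        - (α t * ((θ (t + 1) ⬝ᵥ φ t) - (θ t ⬝ᵥ φ t))) • φ t :=
  trueOnlineTD_special_case_general n φ α R γ A hA e ebar abar θ hθ habar hebar
end
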